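/- If a(x), b(x), c(x) ∈ ℂ[x] are coprime, not all constant, and a + b + c = 0, where a = ∏_j T_{0j}^{l_{0j}}, b = ∏_j T_{1j}^{l_{1j}}, c = ∏_j T_{2j}^{l_{2j}} with m_{ij} distinct roots of T_{ij}, then Σ_{i,j} l_{ij} m_{ij} ≤ 3(Σ_{i,j} m_{ij}) - 3. In particular min_i (min_j l_{ij}) ≤ 2. -/

import Mathlib

open Polynomial

/-!
By Mason–Stothers, each of `deg a`, `deg b`, `deg c` is less than the number of distinct roots
of `abc`, which is at most `Σ m_{ij}`; summing the three bounds gives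
`deg a + deg b + deg c + 3 ≤ 3 Σ m_{ij}`. On the other hand `deg T_{ij} ≥ m_{ij}`, so
`deg a + deg b + deg c ≥ Σ l_{ij} m_{ij}`. If every `l_{ij}` were at least `3`, this would give
`3 Σ m_{ij} + 3 ≤ 3 Σ m_{ij}`.
-/

open UniqueFactorizationMonoid

section CommRing

variable {R : Type*} [CommRing R] {a b c : R}

theorem isRelPrime_of_add_add_eq_zero (hcop : ∀ d, d ∣ a → d ∣ b → d ∣ c → IsUnit d)
    (habc : a + b + c = 0) : IsRelPrime a b := fun d hda hdb =>
  hcop d hda hdb (eq_neg_of_add_eq_zero_right habc ▸ dvd_neg.mpr (dvd_add hda hdb))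

theorem isUnit_of_add_add_eq_zero_of_eq_zero (hcop : ∀ d, d ∣ a → d ∣ b → d ∣ c → IsUnit d)
    (habc : a + b + c = 0) (ha : a = 0) : IsUnit b ∧ IsUnit c := by
  have hc : c = -b := by linear_combination habc - ha
  have hb : IsUnit b := hcop b (ha ▸ dvd_zero b) dvd_rfl (hc ▸ dvd_neg.mpr dvd_rfl)
  exact ⟨hb, hc ▸ hb.neg⟩

end CommRing

namespace Polynomial

section IsDomain

variable {R : Type*} [CommRing R] [IsDomain R]

theorem ne_zero_of_add_add_eq_zero {a b c : R[X]}
    (hcop : ∀ d, d ∣ a → d ∣ b → d ∣ c → IsUnit d)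
    (hnc : ¬ (a.natDegree = 0 ∧ b.natDegree = 0 ∧ c.natDegree = 0)) (habc : a + b + c = 0) :
    a ≠ 0 ∧ b ≠ 0 ∧ c ≠ 0 := by
  have key : ∀ {x y z : R[X]}, (∀ d, d ∣ x → d ∣ y → d ∣ z → IsUnit d) → x + y + z = 0 →
      x = 0 → x.natDegree = 0 ∧ y.natDegree = 0 ∧ z.natDegree = 0 := fun hcop habc hx =>
    have hyz := isUnit_of_add_add_eq_zero_of_eq_zero hcop habc hx
    ⟨hx ▸ natDegree_zero, natDegree_eq_zero_of_isUnit hyz.1, natDegree_eq_zero_of_isUnit hyz.2⟩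
  refine ⟨fun ha => hnc (key hcop habc ha), fun hb => hnc ?_, fun hc => hnc ?_⟩
  · obtain ⟨hb, hc, ha⟩ := key (fun d hb hc ha => hcop d ha hb hc)
      (by linear_combination habc) hb
    exact ⟨ha, hb, hc⟩
  · obtain ⟨hc, ha, hb⟩ := key (fun d hc ha hb => hcop d ha hb hc)
      (by linear_combination habc) hc
    exact ⟨ha, hb, hc⟩

variable [DecidableEq R]

theorem card_roots_toFinset_mul_le (p q : R[X]) :
    (p * q).roots.toFinset.card ≤ p.roots.toFinset.card + q.roots.toFinset.card := by
  rcases eq_or_ne (p * q) 0 with hpq | hpq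
  · simp [hpq]
  rw [roots_mul hpq, Multiset.toFinset_add]
  exact Finset.card_union_le _ _

theorem card_roots_toFinset_prod_pow_le {ι : Type*} (s : Finset ι) (T : ι → R[X]) (l : ι → ℕ) :
    (∏ j ∈ s, T j ^ l j).roots.toFinset.card ≤ ∑ j ∈ s, (T j).roots.toFinset.card := by
  refine (Finset.card_le_card fun r hr => ?_).trans Finset.card_biUnion_le
  obtain ⟨hprod, hroot⟩ := mem_roots'.mp (Multiset.mem_toFinset.mp hr)
  rw [IsRoot, eval_prod, Finset.prod_eq_zero_iff] at hroot
  obtain ⟨j, hj, hTj⟩ := hroot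
  have hr : r ∈ (T j ^ l j).roots :=
    mem_roots'.mpr ⟨Finset.prod_ne_zero_iff.mp hprod j hj, hTj⟩
  rw [roots_pow] at hr
  exact Finset.mem_biUnion.mpr ⟨j, hj, Multiset.mem_toFinset.mpr (Multiset.mem_of_mem_nsmul hr)⟩

theorem sum_mul_card_roots_toFinset_le_natDegree_prod_pow {ι : Type*} {s : Finset ι}
    {T : ι → R[X]} {l : ι → ℕ} (h : ∏ j ∈ s, T j ^ l j ≠ 0) :
    ∑ j ∈ s, l j * (T j).roots.toFinset.card ≤ (∏ j ∈ s, T j ^ l j).natDegree := by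
  rw [natDegree_prod _ _ (Finset.prod_ne_zero_iff.mp h)]
  refine Finset.sum_le_sum fun j _ => ?_
  rw [natDegree_pow]
  exact Nat.mul_le_mul_left _ ((Multiset.toFinset_card_le _).trans (card_roots' _))

end IsDomain

section IsAlgClosed

variable {k : Type*} [Field k] [IsAlgClosed k] [DecidableEq k]

-- `radical p` is squarefree, hence separable, so it has `natDegree` many distinct roots.
theorem natDegree_radical_le_card_roots_toFinset (p : k[X]) :
    (radical p).natDegree ≤ p.roots.toFinset.card := by
  rcases eq_or_ne p 0 with rfl | hp
  · simp
  have hsep : (radical p).Separable := PerfectField.separable_iff_squarefree.mpr squarefree_radical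
  calc (radical p).natDegree = (radical p).roots.toFinset.card := by
        rw [Multiset.toFinset_card_of_nodup (nodup_roots hsep), IsAlgClosed.card_roots_eq_natDegree]
    _ ≤ p.roots.toFinset.card := Finset.card_le_card <| Multiset.toFinset_subset.mpr <|
        Multiset.subset_of_le (roots.le_of_dvd hp radical_dvd_self)

theorem natDegree_add_natDegree_add_natDegree_add_three_le [CharZero k] {a b c : k[X]}
    (ha : a ≠ 0) (hb : b ≠ 0) (hc : c ≠ 0) (hab : IsCoprime a b) (habc : a + b + c = 0)
    (hnc : ¬ (a.natDegree = 0 ∧ b.natDegree = 0 ∧ c.natDegree = 0)) :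
    a.natDegree + b.natDegree + c.natDegree + 3 ≤
      3 * (a.roots.toFinset.card + b.roots.toFinset.card + c.roots.toFinset.card) := by
  have hrad : (radical (a * b * c)).natDegree ≤
      a.roots.toFinset.card + b.roots.toFinset.card + c.roots.toFinset.card :=
    (natDegree_radical_le_card_roots_toFinset _).trans <|
      (card_roots_toFinset_mul_le _ _).trans (by grw [card_roots_toFinset_mul_le a b])
  rcases Polynomial.abc ha hb hc hab habc with ⟨hma, hmb, hmc⟩ | ⟨hda, hdb, hdc⟩
  · omega
  · exact absurd ⟨derivative_eq_zero.mp hda, derivative_eq_zero.mp hdb,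
      derivative_eq_zero.mp hdc⟩ hnc

end IsAlgClosed

end Polynomial

theorem type2_abc_inequality_general (n0 n1 n2 : ℕ)
    (l0 : Fin n0 → ℕ) (l1 : Fin n1 → ℕ) (l2 : Fin n2 → ℕ)
    (T0 : Fin n0 → ℂ[X]) (T1 : Fin n1 → ℂ[X]) (T2 : Fin n2 → ℂ[X])
    (a b c : ℂ[X])
    (ha : a = ∏ j, T0 j ^ l0 j) (hb : b = ∏ j, T1 j ^ l1 j) (hc : c = ∏ j, T2 j ^ l2 j)
    (hcop : ∀ d : ℂ[X], d ∣ a → d ∣ b → d ∣ c → IsUnit d)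
    (hnc : ¬ (a.natDegree = 0 ∧ b.natDegree = 0 ∧ c.natDegree = 0))
    (habc : a + b + c = 0) :
    ((∑ j, (l0 j : ℤ) * ((T0 j).roots.toFinset.card : ℤ))
      + (∑ j, (l1 j : ℤ) * ((T1 j).roots.toFinset.card : ℤ))
      + (∑ j, (l2 j : ℤ) * ((T2 j).roots.toFinset.card : ℤ))
      ≤ 3 * ((∑ j, ((T0 j).roots.toFinset.card : ℤ))
            + (∑ j, ((T1 j).roots.toFinset.card : ℤ))
            + (∑ j, ((T2 j).roots.toFinset.card : ℤ))) - 3)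
    ∧ ((∃ j, l0 j ≤ 2) ∨ (∃ j, l1 j ≤ 2) ∨ (∃ j, l2 j ≤ 2)) := by
  obtain ⟨ha0, hb0, hc0⟩ := ne_zero_of_add_add_eq_zero hcop hnc habc
  have hmason := natDegree_add_natDegree_add_natDegree_add_three_le ha0 hb0 hc0
    (isRelPrime_of_add_add_eq_zero hcop habc).isCoprime habc hnc
  subst ha hb hc
  have hdeg0 := sum_mul_card_roots_toFinset_le_natDegree_prod_pow ha0
  have hdeg1 := sum_mul_card_roots_toFinset_le_natDegree_prod_pow hb0
  have hdeg2 := sum_mul_card_roots_toFinset_le_natDegree_prod_pow hc0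
  have hroots0 := card_roots_toFinset_prod_pow_le Finset.univ T0 l0
  have hroots1 := card_roots_toFinset_prod_pow_le Finset.univ T1 l1
  have hroots2 := card_roots_toFinset_prod_pow_le Finset.univ T2 l2
  have hnat : (∑ j, l0 j * (T0 j).roots.toFinset.card) + (∑ j, l1 j * (T1 j).roots.toFinset.card)
      + (∑ j, l2 j * (T2 j).roots.toFinset.card) + 3 ≤ 3 * ((∑ j, (T0 j).roots.toFinset.card)
        + (∑ j, (T1 j).roots.toFinset.card) + (∑ j, (T2 j).roots.toFinset.card)) := by
    omega
  refine ⟨by zify at hnat; linarith, ?_⟩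
  by_contra! hl
  have three_mul_le {n : ℕ} (l : Fin n → ℕ) (T : Fin n → ℂ[X]) (hl : ∀ j, 2 < l j) :
      3 * ∑ j, (T j).roots.toFinset.card ≤ ∑ j, l j * (T j).roots.toFinset.card := by
    rw [Finset.mul_sum]
    exact Finset.sum_le_sum fun j _ => Nat.mul_le_mul_right _ (hl j)
  have := three_mul_le l0 T0 hl.1
  have := three_mul_le l1 T1 hl.2.1
  have := three_mul_le l2 T2 hl.2.2
  omega

/-- If `a + b + c = 0` for coprime, not all constant products
`a = ∏ T_{0j}^{l_{0j}}`, `b = ∏ T_{1j}^{l_{1j}}`, `c = ∏ T_{2j}^{l_{2j}}`, and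
`m_{ij}` is the number of distinct roots of `T_{ij}`, then
`Σ l_{ij} m_{ij} ≤ 3 Σ m_{ij} - 3`; in particular some exponent is at most `2`. -/
theorem type2_abc_inequality (n0 n1 n2 : ℕ) (hn0 : 0 < n0) (hn1 : 0 < n1) (hn2 : 0 < n2)
    (l0 : Fin n0 → ℕ) (l1 : Fin n1 → ℕ) (l2 : Fin n2 → ℕ)
    (hl0 : ∀ j, 0 < l0 j) (hl1 : ∀ j, 0 < l1 j) (hl2 : ∀ j, 0 < l2 j)
    (T0 : Fin n0 → ℂ[X]) (T1 : Fin n1 → ℂ[X]) (T2 : Fin n2 → ℂ[X])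
    (a b c : ℂ[X])
    (ha : a = ∏ j, T0 j ^ l0 j) (hb : b = ∏ j, T1 j ^ l1 j) (hc : c = ∏ j, T2 j ^ l2 j)
    (hcop : ∀ d : ℂ[X], d ∣ a → d ∣ b → d ∣ c → IsUnit d)
    (hnc : ¬ (a.natDegree = 0 ∧ b.natDegree = 0 ∧ c.natDegree = 0))
    (habc : a + b + c = 0) :
    ((∑ j, (l0 j : ℤ) * ((T0 j).roots.toFinset.card : ℤ))
      + (∑ j, (l1 j : ℤ) * ((T1 j).roots.toFinset.card : ℤ))
      + (∑ j, (l2 j : ℤ) * ((T2 j).roots.toFinset.card : ℤ))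
      ≤ 3 * ((∑ j, ((T0 j).roots.toFinset.card : ℤ))
            + (∑ j, ((T1 j).roots.toFinset.card : ℤ))
            + (∑ j, ((T2 j).roots.toFinset.card : ℤ))) - 3)
    ∧ ((∃ j, l0 j ≤ 2) ∨ (∃ j, l1 j ≤ 2) ∨ (∃ j, l2 j ≤ 2)) :=
  type2_abc_inequality_general n0 n1 n2 l0 l1 l2 T0 T1 T2 a b c ha hb hc hcop hnc habc
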